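/- arXiv:2504.05039 — 2 statements merged into one kernel-verified Lean document; each statement's English description precedes it below -/
import Mathlib

section
/- Let G be a graph, (T, 𝓑) a tree decomposition, {x,y} ∈ E(T) with adhesion set A, G_x the union of bags in the x-side subtree. Let 𝓗 be a non-piercing family of connected subgraphs. If H, H' ∈ 𝓗 satisfy V(H) ∩ A ⊊ V(H') ∩ A (strict inclusion, with V(H) ∩ A nonempty) and H|_x and H'|_x properly intersect, then V(H) \ V(G_x) ⊆ V(H') \ V(G_x). -/
open scoped ENNReal

/-- A tree decomposition of a graph `G`: a tree `T` with bags `bag i ⊆ V` such that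
every vertex appears in a bag, every edge lies in a bag, and the bags containing a
fixed vertex form a connected subtree. -/
def IsTreeDecomp {V ι : Type} (G : SimpleGraph V) (T : SimpleGraph ι) (bag : ι → Set V) : Prop :=
  T.IsTree ∧ (∀ v, ∃ i, v ∈ bag i) ∧
    (∀ u v, G.Adj u v → ∃ i, u ∈ bag i ∧ v ∈ bag i) ∧
    (∀ v, (T.induce {i | v ∈ bag i}).Connected)

/-- Width of a tree decomposition: (max bag size) − 1. -/
noncomputable def decompWidth {V ι : Type} (bag : ι → Set V) : ℕ∞ :=
  (⨆ i, (bag i).encard) - 1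

/-- Treewidth: the infimum of widths of tree decompositions. -/
noncomputable def treewidth {V : Type} (G : SimpleGraph V) : ℕ∞ :=
  sInf {w : ℕ∞ | ∃ (ι : Type) (T : SimpleGraph ι) (bag : ι → Set V),
    IsTreeDecomp G T bag ∧ w = decompWidth bag}

/-- A family of vertex sets is non-piercing in `G` if every pairwise difference
(when nonempty) induces a connected subgraph of `G`. -/
def NonPiercing {V : Type} (G : SimpleGraph V) (F : Set (Set V)) : Prop :=
  ∀ H ∈ F, ∀ H' ∈ F, (H \ H').Nonempty → (G.induce (H \ H')).Connected

/-- Outerplanarity via a one-page (circular, non-crossing) layout. -/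
def Outerplanar {α : Type} (Q : SimpleGraph α) : Prop :=
  ∃ f : α → ℕ, Function.Injective f ∧
    ∀ a b c d : α, Q.Adj a b → Q.Adj c d →
      ¬ (f a < f c ∧ f c < f b ∧ f b < f d)

/-- `a, b, c` appear in this (clockwise) cyclic order on the cycle `Fin n`. -/
def Cyc3 {n : ℕ} (a b c : Fin n) : Prop :=
  (a < b ∧ b < c) ∨ (b < c ∧ c < a) ∨ (c < a ∧ a < b)

/-- `a, b, c, d` appear in this (clockwise) cyclic order on the cycle `Fin n`. -/
def Cyc4 {n : ℕ} (a b c d : Fin n) : Prop :=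
  (a < b ∧ b < c ∧ c < d) ∨ (b < c ∧ c < d ∧ d < a) ∨
    (c < d ∧ d < a ∧ a < b) ∨ (d < a ∧ a < b ∧ b < c)

/-- Open arc of vertices strictly between `u` and `v` clockwise. -/
def arcO {n : ℕ} (u v : Fin n) : Set (Fin n) := {w | Cyc3 u w v}

/-- Closed arc of vertices from `u` to `v` clockwise (inclusive). -/
def arcC {n : ℕ} (u v : Fin n) : Set (Fin n) := {u} ∪ {v} ∪ {w | Cyc3 u w v}

/-- The cycle system is `axax`-free. -/
def AxaxFree {n : ℕ} (F : Set (Set (Fin n))) : Prop :=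
  ¬ ∃ H ∈ F, ∃ H' ∈ F, ∃ a₁ x₁ a₂ x₂ : Fin n,
    Cyc4 a₁ x₁ a₂ x₂ ∧ a₁ ∈ H \ H' ∧ a₂ ∈ H \ H' ∧ x₁ ∈ H' ∧ x₂ ∈ H'

/-- The cycle system is `abab`-free. -/
def AbabFree {n : ℕ} (F : Set (Set (Fin n))) : Prop :=
  ¬ ∃ H ∈ F, ∃ H' ∈ F, ∃ a₁ b₁ a₂ b₂ : Fin n,
    Cyc4 a₁ b₁ a₂ b₂ ∧ a₁ ∈ H \ H' ∧ a₂ ∈ H \ H' ∧ b₁ ∈ H' \ H ∧ b₂ ∈ H' \ H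

/-- The vertices appearing in bags of the component of `T` minus the edge `{x,y}`
that contains `x` (the `x`-side of the tree decomposition). -/
def sideVerts {V ι : Type} (T : SimpleGraph ι) (bag : ι → Set V) (x y : ι) : Set V :=
  ⋃ i ∈ {i | (T.deleteEdges {s(x, y)}).Reachable x i}, bag i

/-- Adjacency in the `N × N` grid graph. -/
def gridAdj {N : ℕ} (p q : Fin N × Fin N) : Prop :=
  (p.1 = q.1 ∧ (p.2.val + 1 = q.2.val ∨ q.2.val + 1 = p.2.val)) ∨
    (p.2 = q.2 ∧ (p.1.val + 1 = q.1.val ∨ q.1.val + 1 = p.1.val))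

/-- Clockwise distance from `b` to `a` on the cycle `Fin n`. -/
def relpos {n : ℕ} (a b : Fin n) : ℕ := (a.val + n - b.val) % n

/-- Lexicographic comparison on pairs of naturals. -/
def lexLe (p q : ℕ × ℕ) : Prop := p.1 < q.1 ∨ (p.1 = q.1 ∧ p.2 ≤ q.2)

/-- A set of indices forming a (possibly empty) cyclic interval of `Fin m`. -/
def CycInterval {m : ℕ} (S : Set (Fin m)) : Prop := S = ∅ ∨ ∃ i j : Fin m, S = arcC i j

/-- Maximal elements of a family of sets under inclusion. -/
def maxElems {X : Type} (F : Set (Set X)) : Set (Set X) :=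
  {H ∈ F | ∀ H' ∈ F, H ⊆ H' → H = H'}


lemma walk_boundary {α : Type*} {Q : SimpleGraph α} (P : α → Prop) :
    ∀ {a b : α}, Q.Walk a b → P a → ¬ P b → ∃ c d, Q.Adj c d ∧ P c ∧ ¬ P d := by
  intro a b w
  induction w with
  | nil => intro ha hb; exact absurd ha hb
  | @cons a m b h p ih =>
    intro ha hb
    by_cases h' : P m
    · exact ih h' hb
    · exact ⟨_, _, h, ha, h'⟩

lemma sep_lemma {V ι : Type} (T : SimpleGraph ι) (bag : ι → Set V)
    (hcb : ∀ v, (T.induce {i | v ∈ bag i}).Connected) (x y : ι)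
    {u w : V} (hbag : ∃ i, u ∈ bag i ∧ w ∈ bag i)
    (hu : u ∈ sideVerts T bag x y) (hw : w ∉ sideVerts T bag x y) :
    u ∈ bag x ∩ bag y := by
  obtain ⟨i, hui, hwi⟩ := hbag
  have hi : ¬ (T.deleteEdges {s(x, y)}).Reachable x i := by
    intro h
    exact hw (Set.mem_biUnion h hwi)
  obtain ⟨j, hj, huj⟩ := Set.mem_iUnion₂.mp hu
  have hconn := hcb u
  have hr : (T.induce {i | u ∈ bag i}).Reachable ⟨j, huj⟩ ⟨i, hui⟩ := hconn ⟨j, huj⟩ ⟨i, hui⟩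
  obtain ⟨W⟩ := hr
  obtain ⟨c, d, hcd, hPc, hPd⟩ :=
    walk_boundary (fun k : {i | u ∈ bag i} => (T.deleteEdges {s(x, y)}).Reachable x k.val)
      W hj hi
  have hT : T.Adj c.val d.val := hcd
  have heq : s(c.val, d.val) = s(x, y) := by
    by_contra hne
    have : (T.deleteEdges {s(x, y)}).Adj c.val d.val := by
      rw [SimpleGraph.deleteEdges_adj]
      exact ⟨hT, by simpa using hne⟩
    exact hPd (hPc.trans this.reachable)
  rw [Sym2.eq_iff] at heq
  rcases heq with ⟨hcx, hdy⟩ | ⟨hcy, hdx⟩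
  · have h1 : u ∈ bag c.val := c.property
    have h2 : u ∈ bag d.val := d.property
    rw [hcx] at h1; rw [hdy] at h2
    exact ⟨h1, h2⟩
  · exfalso
    apply hPd
    rw [hdx]

theorem stmt6 {V ι : Type} (G : SimpleGraph V) (T : SimpleGraph ι) (bag : ι → Set V)
    (hTD : IsTreeDecomp G T bag) (x y : ι) (hxy : T.Adj x y)
    (𝓗 : Set (Set V))
    (hconn : ∀ H ∈ 𝓗, (G.induce H).Connected)
    (hnp : NonPiercing G 𝓗)
    (H H' : Set V) (hH : H ∈ 𝓗) (hH' : H' ∈ 𝓗)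
    (hA : H ∩ (bag x ∩ bag y) ⊂ H' ∩ (bag x ∩ bag y))
    (hAne : (H ∩ (bag x ∩ bag y)).Nonempty)
    (hpi1 : ((H ∩ sideVerts T bag x y) \ (H' ∩ sideVerts T bag x y)).Nonempty)
    (hpi2 : ((H' ∩ sideVerts T bag x y) \ (H ∩ sideVerts T bag x y)).Nonempty) :
    H \ sideVerts T bag x y ⊆ H' \ sideVerts T bag x y := by
  intro v hv
  obtain ⟨hvH, hvG⟩ := hv
  refine ⟨?_, hvG⟩
  by_contra hvH'
  obtain ⟨u, hu1, hu2⟩ := hpi1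
  obtain ⟨huH, huG⟩ := hu1
  have huH' : u ∉ H' := fun h => hu2 ⟨h, huG⟩
  have hne : (H \ H').Nonempty := ⟨v, hvH, hvH'⟩
  have hC := hnp H hH H' hH' hne
  have hr : (G.induce (H \ H')).Reachable ⟨v, hvH, hvH'⟩ ⟨u, huH, huH'⟩ :=
    hC ⟨v, hvH, hvH'⟩ ⟨u, huH, huH'⟩
  obtain ⟨W⟩ := hr
  obtain ⟨c, d, hcd, hPc, hPd⟩ :=
    walk_boundary (fun k : {a | a ∈ H \ H'} => k.val ∉ sideVerts T bag x y) W hvG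
      (by simpa using huG)
  simp only [not_not] at hPd
  have hG : G.Adj c.val d.val := hcd
  have hbag := hTD.2.2.1 _ _ hG.symm
  have hd := sep_lemma T bag hTD.2.2.2 x y hbag hPd hPc
  have hdH : d.val ∈ H := d.property.1
  have hdH' : d.val ∈ H' := (hA.1 ⟨hdH, hd⟩).1
  exact d.property.2 hdH'
end

section
/- For every m ∈ ℕ there exists a graph G with a 2-coloring c : V(G) → {r, b} and a non-piercing family 𝓗 of connected subgraphs of G such that tw(G) ≤ m, but every primal support Q (a graph on the blue vertices in which V(H) ∩ b(V) induces a connected subgraph for every H ∈ 𝓗) contains the N × N grid as a subgraph, where N = C(n, ⌊n/2⌋) with n = ⌊m/2⌋; consequently tw(Q) ≥ 2^{⌊m/2⌋}/√m. -/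
open scoped ENNReal

/-!
Take the complete bipartite graph between `t` blue and `m` red vertices. A tree on the blue
vertices with bags `{b} ∪ reds` is a tree decomposition of width `m`. Give every blue vertex `u`
but the last a distinct `k`-subset `A u` of the reds (`k = max (m / 2) 1`, so that labels are
nonempty) and, for `u < v`, take the hyperedge `{u, v} ∪ A u`. Two such hyperedges with the same
smaller end differ in at most one blue vertex; otherwise their difference contains a blue and a
red vertex, hence is connected. So the family is non-piercing, and since the blue part of each
hyperedge is just `{u, v}`, every primal support is complete on its `t = C(m, k) + 1` vertices.
It contains the `N × N` grid once `N² ≤ t`, and by the Helly property of subtrees one bag of any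
of its tree decompositions contains all of it, so its treewidth is at least
`C(m, k) ≥ 2 ^ (m / 2)`. Both estimates come from `∑ C(n, i)² = C(2n, n)`.
-/

namespace SimpleGraph

variable {V : Type*} {G : SimpleGraph V}

lemma connected_induce_of_subsingleton {s : Set V} (hne : s.Nonempty) (hs : s.Subsingleton) :
    (G.induce s).Connected :=
  have := hne.to_subtype
  have := hs.coe_sort
  Connected.of_subsingleton

lemma adj_of_connected_induce_pair {u v : V} (huv : u ≠ v) (h : (G.induce {u, v}).Connected) :
    G.Adj u v := by
  obtain ⟨p⟩ := h.preconnected ⟨u, by simp⟩ ⟨v, by simp⟩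
  have hp : ¬ p.Nil := Walk.not_nil_of_ne (by simpa using huv)
  have hsnd : G.Adj u p.snd := p.adj_snd hp
  rcases p.snd.2 with hw | hw
  · exact absurd (hw ▸ hsnd) G.irrefl
  · exact hw ▸ hsnd

lemma connected_induce_completeBipartiteGraph {W : Type*} {s : Set (V ⊕ W)}
    (hl : ∃ v, Sum.inl v ∈ s) (hr : ∃ w, Sum.inr w ∈ s) :
    ((completeBipartiteGraph V W).induce s).Connected := by
  obtain ⟨v₀, hv₀⟩ := hl
  obtain ⟨w₀, hw₀⟩ := hr
  have hadj : ∀ v w (hv : Sum.inl v ∈ s) (hw : Sum.inr w ∈ s),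
      ((completeBipartiteGraph V W).induce s).Adj ⟨_, hv⟩ ⟨_, hw⟩ := by
    intros; simp
  rw [connected_iff_exists_forall_reachable]
  refine ⟨⟨_, hv₀⟩, ?_⟩
  rintro ⟨v | w, hx⟩
  · exact (hadj v₀ w₀ hv₀ hw₀).reachable.trans (hadj v w₀ hx hw₀).reachable.symm
  · exact (hadj v₀ w hv₀ hx).reachable

lemma exists_isPath_of_connected_induce {s : Set V} (h : (G.induce s).Connected) {x y : V}
    (hx : x ∈ s) (hy : y ∈ s) : ∃ p : G.Walk x y, p.IsPath ∧ ∀ z ∈ p.support, z ∈ s := by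
  classical
  obtain ⟨p⟩ := h.preconnected ⟨x, hx⟩ ⟨y, hy⟩
  let e : G.induce s ↪g G := Embedding.induce s
  have hsupp : ∀ z ∈ (p.bypass.map e.toHom).support, z ∈ s := by
    intro z hz
    rw [Walk.support_map, List.mem_map] at hz
    obtain ⟨z', -, rfl⟩ := hz
    exact z'.2
  exact ⟨_, p.bypass_isPath.map e.injective, hsupp⟩

namespace Walk

lemma exists_isPath_first_mem {u v : V} (p : G.Walk u v) {s : Set V} (hv : v ∈ s) :
    ∃ j ∈ s, ∃ q : G.Walk u j, q.IsPath ∧ ∀ z ∈ q.support, z ∈ s → z = j := by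
  classical
  suffices ∃ j ∈ s, ∃ q : G.Walk u j, ∀ z ∈ q.support, z ∈ s → z = j by
    obtain ⟨j, hj, q, hq⟩ := this
    exact ⟨j, hj, q.bypass, q.bypass_isPath,
      fun z hz => hq z (q.support_bypass_subset_support hz)⟩
  induction p with
  | nil => exact ⟨_, hv, nil, by simp⟩
  | @cons u w v h p ih =>
    by_cases hu : u ∈ s
    · exact ⟨u, hu, nil, by simp⟩
    · obtain ⟨j, hj, q, hq⟩ := ih hv
      refine ⟨j, hj, cons h q, fun z hz hzs => ?_⟩
      rcases List.mem_cons.1 (support_cons h q ▸ hz) with rfl | hz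
      · exact absurd hzs hu
      · exact hq z hz hzs

lemma IsPath.append {u v w : V} {p : G.Walk u v} {q : G.Walk v w} (hp : p.IsPath)
    (hq : q.IsPath) (h : ∀ z ∈ p.support, z ∈ q.support → z = v) : (p.append q).IsPath := by
  rw [isPath_def, support_append, List.nodup_append]
  refine ⟨hp.support_nodup, hq.support_nodup.sublist (List.tail_sublist _), ?_⟩
  rintro z hzp _ hzq rfl
  obtain rfl := h z hzp (List.mem_of_mem_tail hzq)
  have hnd := hq.support_nodup
  rw [← cons_tail_support] at hnd
  exact (List.nodup_cons.1 hnd).1 hzq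

end Walk

/-- `j` is where a path from `i` first enters `S`: by uniqueness of paths in a tree, the path from
`i` to a vertex of `U ∩ S` inside `U` runs through `j`. -/
lemma IsTree.exists_gate {ι : Type*} {T : SimpleGraph ι} (hT : T.IsTree) {S : Set ι}
    (hS : (T.induce S).Connected) (i : ι) :
    ∃ j ∈ S, ∀ U : Set ι, (T.induce U).Connected → i ∈ U → (U ∩ S).Nonempty → j ∈ U := by
  obtain ⟨⟨k₀, hk₀⟩⟩ := hS.nonempty
  obtain ⟨j, hj, q, hq, hqS⟩ :=
    (hT.connected.preconnected i k₀).some.exists_isPath_first_mem hk₀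
  refine ⟨j, hj, fun U hU hi ⟨k, hkU, hkS⟩ => ?_⟩
  obtain ⟨r, hr, hrU⟩ := exists_isPath_of_connected_induce hU hi hkU
  obtain ⟨s, hs, hsS⟩ := exists_isPath_of_connected_induce hS hj hkS
  have hqs : (q.append s).IsPath := hq.append hs fun z hz hz' => hqS z hz (hsS z hz')
  have : q.append s = r :=
    congrArg Subtype.val ((hT.isAcyclic.subsingleton_path i k).elim ⟨_, hqs⟩ ⟨r, hr⟩)
  exact hrU j (this ▸ (Walk.mem_support_append_iff _ _).2 (Or.inl q.end_mem_support))

end SimpleGraph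

section TreeDecomposition

open SimpleGraph

variable {V ι : Type} {G : SimpleGraph V} {T : SimpleGraph ι} {bag : ι → Set V}

lemma treewidth_le_decompWidth (h : IsTreeDecomp G T bag) : treewidth G ≤ decompWidth bag :=
  sInf_le ⟨ι, T, bag, h, rfl⟩

/-- Helly property for the pairwise intersecting subtrees `{i | v ∈ bag i}`, `v ∈ W`. -/
lemma IsTreeDecomp.exists_subset_bag_of_isClique (hd : IsTreeDecomp G T bag) (W : Finset V)
    (hW : G.IsClique (W : Set V)) : ∃ i, (W : Set V) ⊆ bag i := by
  classical
  obtain ⟨hT, -, hedge, hconn⟩ := hd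
  induction W using Finset.induction_on with
  | empty =>
    obtain ⟨i⟩ := hT.connected.nonempty
    exact ⟨i, by simp⟩
  | @insert w W hw ih =>
    obtain ⟨i₀, hi₀⟩ := ih (hW.subset (by simp))
    obtain ⟨j, hj, hgate⟩ := hT.exists_gate (hconn w) i₀
    refine ⟨j, ?_⟩
    rw [Finset.coe_insert, Set.insert_subset_iff]
    refine ⟨hj, fun u hu => hgate {i | u ∈ bag i} (hconn u) (hi₀ hu) ?_⟩
    have huw : u ≠ w := by rintro rfl; exact hw hu
    obtain ⟨k, hku, hkw⟩ := hedge u w (hW (by simp [hu]) (by simp) huw)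
    exact ⟨k, hku, hkw⟩

lemma le_treewidth_of_isClique (W : Finset V) (hW : G.IsClique (W : Set V)) :
    (W.card : ℕ∞) - 1 ≤ treewidth G := by
  refine le_sInf ?_
  rintro _ ⟨ι, T, bag, hd, rfl⟩
  obtain ⟨i, hi⟩ := hd.exists_subset_bag_of_isClique W hW
  refine tsub_le_tsub_right ?_ 1
  calc (W.card : ℕ∞) = (W : Set V).encard := (Set.encard_coe_eq_coe_finsetCard W).symm
    _ ≤ (bag i).encard := Set.encard_le_encard hi
    _ ≤ ⨆ i, (bag i).encard := le_iSup (fun i => (bag i).encard) i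

lemma isTreeDecomp_completeBipartiteGraph {B R : Type} {T : SimpleGraph B} (hT : T.IsTree) :
    IsTreeDecomp (completeBipartiteGraph B R) T
      (fun b => insert (Sum.inl b) (Set.range Sum.inr)) := by
  refine ⟨hT, ?_, ?_, ?_⟩
  · rintro (b | r)
    · exact ⟨b, Set.mem_insert _ _⟩
    · obtain ⟨b⟩ := hT.connected.nonempty
      exact ⟨b, Or.inr ⟨r, rfl⟩⟩
  · rintro (b | r) (b' | r') h <;> simp at h
    · exact ⟨b, by simp⟩
    · exact ⟨b', by simp⟩
  · rintro (b | r)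
    · have hb : {i | Sum.inl b ∈ insert (Sum.inl i) (Set.range (Sum.inr : R → B ⊕ R))} =
          {b} := by
        ext; simp [eq_comm]
      beta_reduce
      rw [hb]
      exact connected_induce_of_subsingleton (Set.singleton_nonempty b) Set.subsingleton_singleton
    · have hr : {i | Sum.inr r ∈ insert (Sum.inl i) (Set.range (Sum.inr : R → B ⊕ R))} =
          Set.univ := by
        ext; simp
      beta_reduce
      rw [hr]
      exact (induceUnivIso T).connected_iff.2 hT.connected

lemma treewidth_completeBipartiteGraph_le {B R : Type} {T : SimpleGraph B} (hT : T.IsTree) :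
    treewidth (completeBipartiteGraph B R) ≤ ENat.card R := by
  refine (treewidth_le_decompWidth (isTreeDecomp_completeBipartiteGraph hT)).trans ?_
  refine tsub_le_iff_right.2 (iSup_le fun b => (Set.encard_insert_le _ _).trans_eq ?_)
  rw [← Set.image_univ, Sum.inr_injective.encard_image, Set.encard_univ]

end TreeDecomposition

def IsPrimalSupport {V : Type} (c : V → Bool) (𝓗 : Set (Set V))
    (Q : SimpleGraph {v : V // c v = true}) : Prop :=
  ∀ H ∈ 𝓗, (H ∩ {v | c v = true}).Nonempty →
    (Q.induce {v : {v : V // c v = true} | (v : V) ∈ H}).Connected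

section PairFamily

open SimpleGraph

variable {B R : Type}

def pairHyperedge (A : B → Set R) (u v : B) : Set (B ⊕ R) :=
  {Sum.inl u, Sum.inl v} ∪ Sum.inr '' A u

@[simp]
lemma inl_mem_pairHyperedge {A : B → Set R} {u v w : B} :
    Sum.inl w ∈ pairHyperedge A u v ↔ w = u ∨ w = v := by
  simp [pairHyperedge]

@[simp]
lemma inr_mem_pairHyperedge {A : B → Set R} {u v : B} {r : R} :
    Sum.inr r ∈ pairHyperedge A u v ↔ r ∈ A u := by
  simp [pairHyperedge]

lemma connected_induce_pairHyperedge {A : B → Set R} {u : B} (v : B) (hA : (A u).Nonempty) :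
    ((completeBipartiteGraph B R).induce (pairHyperedge A u v)).Connected :=
  connected_induce_completeBipartiteGraph ⟨u, by simp⟩ (hA.imp fun _ h => by simpa)

variable [LinearOrder B]

def pairFamily (A : B → Set R) : Set (Set (B ⊕ R)) :=
  {H | ∃ u v, u < v ∧ H = pairHyperedge A u v}

variable {A : B → Set R}

lemma nonPiercing_pairFamily
    (hA : ∀ u v u' v', u < v → u' < v' → u ≠ u' → (A u \ A u').Nonempty) :
    NonPiercing (completeBipartiteGraph B R) (pairFamily A) := by
  rintro _ ⟨u, v, huv, rfl⟩ _ ⟨u', v', huv', rfl⟩ hne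
  rcases eq_or_ne u u' with rfl | hu
  · refine connected_induce_of_subsingleton hne
      (Set.subsingleton_of_subset_singleton (a := Sum.inl v) ?_)
    rintro (w | r) ⟨h, h'⟩ <;> simp_all
  · apply connected_induce_completeBipartiteGraph
    · by_cases hv' : u = v'
      · subst hv'
        exact ⟨v, by simp [(huv'.trans huv).ne', huv.ne']⟩
      · exact ⟨u, by simp [hu, hv']⟩
    · obtain ⟨r, hr, hr'⟩ := hA u v u' v' huv huv' hu
      exact ⟨r, by simp [hr, hr']⟩

lemma IsPrimalSupport.adj_of_pairFamily {Q : SimpleGraph {x : B ⊕ R // x.isLeft = true}}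
    (hQ : IsPrimalSupport Sum.isLeft (pairFamily A) Q) {u v : B} (huv : u ≠ v) :
    Q.Adj ⟨Sum.inl u, rfl⟩ ⟨Sum.inl v, rfl⟩ := by
  wlog h : u < v generalizing u v
  · exact (this huv.symm (huv.lt_or_gt.resolve_left h)).symm
  have hblue : {x : {x : B ⊕ R // x.isLeft = true} | (x : B ⊕ R) ∈ pairHyperedge A u v} =
      {⟨Sum.inl u, rfl⟩, ⟨Sum.inl v, rfl⟩} := by
    ext ⟨x | r, hx⟩
    · simp [Subtype.ext_iff]
    · simp at hx
  have hconn := hQ _ ⟨u, v, h, rfl⟩ ⟨Sum.inl u, by simp, rfl⟩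
  rw [hblue] at hconn
  exact adj_of_connected_induce_pair (by simpa [Subtype.ext_iff] using huv) hconn

end PairFamily

section SubsetLabelling

variable (R : Type) [Fintype R] (k : ℕ)

/-- Distinct `k`-subsets of `R`; the last vertex is never the smaller end of a pair and gets `∅`. -/
noncomputable def subsetLabelling :
    Fin (Fintype.card {s : Finset R // s.card = k} + 1) → Set R :=
  Fin.lastCases ∅ fun i => ((Fintype.equivFin {s : Finset R // s.card = k}).symm i : Finset R)

variable {R k}

lemma subsetLabelling_nonempty (hk : 0 < k)
    {u v : Fin (Fintype.card {s : Finset R // s.card = k} + 1)} (huv : u < v) :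
    (subsetLabelling R k u).Nonempty := by
  obtain ⟨i, rfl⟩ := Fin.eq_castSucc_of_ne_last (Fin.ne_last_of_lt huv)
  simp only [subsetLabelling, Fin.lastCases_castSucc]
  generalize (Fintype.equivFin {s : Finset R // s.card = k}).symm i = s
  exact Finset.coe_nonempty.2 (Finset.card_pos.1 (by rw [s.2]; exact hk))

lemma subsetLabelling_sdiff_nonempty
    {u v u' v' : Fin (Fintype.card {s : Finset R // s.card = k} + 1)}
    (huv : u < v) (huv' : u' < v') (hu : u ≠ u') :
    (subsetLabelling R k u \ subsetLabelling R k u').Nonempty := by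
  obtain ⟨i, rfl⟩ := Fin.eq_castSucc_of_ne_last (Fin.ne_last_of_lt huv)
  obtain ⟨i', rfl⟩ := Fin.eq_castSucc_of_ne_last (Fin.ne_last_of_lt huv')
  have hne : (Fintype.equivFin {s : Finset R // s.card = k}).symm i ≠
      (Fintype.equivFin {s : Finset R // s.card = k}).symm i' :=
    fun h => hu (congrArg Fin.castSucc ((Fintype.equivFin _).symm.injective h))
  simp only [subsetLabelling, Fin.lastCases_castSucc]
  generalize (Fintype.equivFin {s : Finset R // s.card = k}).symm i = s at hne ⊢
  generalize (Fintype.equivFin {s : Finset R // s.card = k}).symm i' = s' at hne ⊢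
  classical
  rw [← Finset.coe_sdiff, Finset.coe_nonempty, Finset.sdiff_nonempty]
  exact fun hsub =>
    hne (Subtype.ext (Finset.eq_of_subset_of_card_le hsub (by rw [s.2, s'.2])))

end SubsetLabelling

lemma two_pow_le_centralBinom (n : ℕ) : 2 ^ n ≤ n.centralBinom := by
  rw [← Nat.sum_range_choose, Nat.centralBinom_eq_two_mul_choose, ← Nat.sum_range_choose_sq]
  exact Finset.sum_le_sum fun i _ => Nat.le_self_pow two_ne_zero _

lemma choose_mul_choose_le_centralBinom (n k : ℕ) :
    n.choose k * n.choose k ≤ n.centralBinom := by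
  rcases le_or_gt k n with hk | hk
  · rw [Nat.centralBinom_eq_two_mul_choose, ← Nat.sum_range_choose_sq, ← sq]
    exact Finset.single_le_sum (f := fun i => n.choose i ^ 2) (fun _ _ => Nat.zero_le _)
      (Finset.mem_range_succ_iff.2 hk)
  · simp [Nat.choose_eq_zero_of_lt hk]

lemma centralBinom_half_le_choose {m : ℕ} (hm : 1 ≤ m) :
    (m / 2).centralBinom ≤ m.choose (max (m / 2) 1) := by
  rcases Nat.eq_zero_or_pos (m / 2) with h | h
  · have : m = 1 := by omega
    subst this
    decide
  · rw [max_eq_left h, Nat.centralBinom_eq_two_mul_choose]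
    exact Nat.choose_le_choose _ (Nat.mul_div_le m 2)

lemma two_pow_half_div_sqrt_le_choose (m : ℕ) :
    (2 : ℝ) ^ (m / 2) / √m ≤ m.choose (max (m / 2) 1) := by
  rcases Nat.eq_zero_or_pos m with rfl | hm
  · simp
  calc (2 : ℝ) ^ (m / 2) / √m ≤ 2 ^ (m / 2) :=
        div_le_self (by positivity) (Real.one_le_sqrt.2 (by exact_mod_cast hm))
    _ ≤ (m / 2).centralBinom := by exact_mod_cast two_pow_le_centralBinom _
    _ ≤ m.choose (max (m / 2) 1) := by exact_mod_cast centralBinom_half_le_choose hm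

lemma choose_half_mul_self_le_choose_add_one (m : ℕ) :
    (m / 2).choose (m / 2 / 2) * (m / 2).choose (m / 2 / 2) ≤ m.choose (max (m / 2) 1) + 1 := by
  rcases Nat.eq_zero_or_pos m with rfl | hm
  · simp
  exact (choose_mul_choose_le_centralBinom _ _).trans
    ((centralBinom_half_le_choose hm).trans (Nat.le_succ _))

lemma ne_of_gridAdj {N : ℕ} {p q : Fin N × Fin N} (h : gridAdj p q) : p ≠ q := by
  rintro rfl
  simp [gridAdj] at h

section CliqueConsequences

variable {α : Type} {Q : SimpleGraph α}

lemma exists_grid_of_pairwise_adj {t N : ℕ} (hN : N * N ≤ t) {f : Fin t → α}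
    (hf : Pairwise fun a b => Q.Adj (f a) (f b)) :
    ∃ g : Fin N × Fin N → α, Function.Injective g ∧ ∀ p q, gridAdj p q → Q.Adj (g p) (g q) := by
  let e : Fin N × Fin N → Fin t := Fin.castLE hN ∘ finProdFinEquiv
  have he : e.Injective := (Fin.castLE_injective hN).comp finProdFinEquiv.injective
  have hf' : f.Injective := Function.injective_iff_pairwise_ne.2 (hf.mono fun _ _ h => h.ne)
  exact ⟨f ∘ e, hf'.comp he, fun p q hpq => hf (he.ne (ne_of_gridAdj hpq))⟩

lemma le_treewidth_of_pairwise_adj {t : ℕ} {f : Fin (t + 1) → α}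
    (hf : Pairwise fun a b => Q.Adj (f a) (f b)) :
    (t : ℕ∞) ≤ treewidth Q := by
  classical
  have hf' : f.Injective := Function.injective_iff_pairwise_ne.2 (hf.mono fun _ _ h => h.ne)
  have hclique : Q.IsClique (Finset.univ.image f : Set α) := by
    rw [Finset.coe_image, Finset.coe_univ, Set.image_univ]
    rintro _ ⟨a, rfl⟩ _ ⟨b, rfl⟩ hab
    exact hf (hf'.ne_iff.1 hab)
  simpa [Finset.card_image_of_injective _ hf'] using le_treewidth_of_isClique _ hclique

end CliqueConsequences

theorem stmt8 (m : ℕ) :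
    ∃ (V : Type) (G : SimpleGraph V) (c : V → Bool) (𝓗 : Set (Set V)),
      (∀ H ∈ 𝓗, (G.induce H).Connected) ∧ NonPiercing G 𝓗 ∧
      treewidth G ≤ (m : ℕ∞) ∧
      ∀ Q : SimpleGraph {v : V // c v = true},
        (∀ H ∈ 𝓗, (H ∩ {v | c v = true}).Nonempty →
          (Q.induce {v : {v : V // c v = true} | (v : V) ∈ H}).Connected) →
        (∃ f : Fin (Nat.choose (m / 2) (m / 2 / 2)) × Fin (Nat.choose (m / 2) (m / 2 / 2)) →
            {v : V // c v = true},
          Function.Injective f ∧ ∀ p q, gridAdj p q → Q.Adj (f p) (f q)) ∧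
        ENNReal.ofReal ((2 : ℝ) ^ (m / 2) / Real.sqrt m) ≤ (treewidth Q : ℝ≥0∞) := by
  set k := max (m / 2) 1
  set L := Fintype.card {s : Finset (Fin m) // s.card = k}
  have hL : L = m.choose k := by simp [L, Fintype.card_finset_len]
  obtain ⟨T, -, hT⟩ := (SimpleGraph.connected_top (V := Fin (L + 1))).exists_isTree_le
  refine ⟨Fin (L + 1) ⊕ Fin m, completeBipartiteGraph _ _, Sum.isLeft,
    pairFamily (subsetLabelling (Fin m) k), ?_, nonPiercing_pairFamily ?_, ?_, fun Q hQ => ?_⟩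
  · rintro _ ⟨u, v, huv, rfl⟩
    exact connected_induce_pairHyperedge v (subsetLabelling_nonempty (by omega) huv)
  · exact fun u v u' v' => subsetLabelling_sdiff_nonempty
  · exact (treewidth_completeBipartiteGraph_le hT).trans (by simp)
  have hclique : Pairwise fun u v : Fin (L + 1) => Q.Adj ⟨Sum.inl u, rfl⟩ ⟨Sum.inl v, rfl⟩ :=
    fun u v huv => IsPrimalSupport.adj_of_pairFamily hQ huv
  refine ⟨exists_grid_of_pairwise_adj (hL ▸ choose_half_mul_self_le_choose_add_one m) hclique,
    ?_⟩
  calc ENNReal.ofReal ((2 : ℝ) ^ (m / 2) / √m) ≤ ((L : ℕ∞) : ℝ≥0∞) := by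
        rw [ENat.toENNReal_coe, ← ENNReal.ofReal_natCast, hL]
        exact ENNReal.ofReal_le_ofReal (two_pow_half_div_sqrt_le_choose m)
    _ ≤ treewidth Q := ENat.toENNReal_le.2 (le_treewidth_of_pairwise_adj hclique)
end
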